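/- The encoding map ω ↦ P_s from n-bit positive integers to self-inverting permutations of {1,...,2n+1} is injective: two distinct n-bit keys yield distinct permutations P_s. -/

import Mathlib

/-!
The last `n` entries of `P_b` are `n, n-1, …, 1` (the leading block of ones of `B*`, reversed)
and every earlier entry exceeds `n`, so `P_s j = b_j` for `1 ≤ j ≤ n`: the permutation `P_s`
determines the first `n` entries of `P_b`. These begin with `Z₀` without its last element
`2n+1`, namely the positions of the zeros of `complement(B)` shifted by `n`, and at most `n` of
them precede `2n+1`. Cutting the prefix at `2n+1` therefore recovers `complement(B)`, hence `B`
and `ω`.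
-/

/-- Binary representation of `ω`, most significant bit first. -/
def binRep (ω : ℕ) : List Bool := (Nat.bits ω).reverse

/-- The extended binary `B*`: `n` ones, then the one's complement of `B`, then a zero. -/
def extBin (ω : ℕ) : List Bool :=
  List.replicate (binRep ω).length true ++ (binRep ω).map (!·) ++ [false]

/-- Ascending list of 1-indexed positions of bit `b` in the bit string `l`. -/
def posOf (l : List Bool) (b : Bool) : List ℕ :=
  ((List.range l.length).filter (fun i => l.getD i false == b)).map (· + 1)

/-- `Z₀`: ascending positions of zeros in `B*`. -/
def Z0 (ω : ℕ) : List ℕ := posOf (extBin ω) false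

/-- `Z₁`: ascending positions of ones in `B*`. -/
def Z1 (ω : ℕ) : List ℕ := posOf (extBin ω) true

/-- Bitonic permutation `P_b = Z₀ ++ reverse Z₁`. -/
def Pb (ω : ℕ) : List ℕ := Z0 ω ++ (Z1 ω).reverse

/-- The self-inverting permutation `P_s`: it pairs the elements of `P_b`
equidistant from its extremes, i.e. `P_s (b_{2n+2-i}) = b_i`. -/
def Ps (ω : ℕ) (x : ℕ) : ℕ :=
  (Pb ω).getD ((Pb ω).length - 1 - (Pb ω).idxOf x) 0

theorem posOf_append (l₁ l₂ : List Bool) (b : Bool) :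
    posOf (l₁ ++ l₂) b = posOf l₁ b ++ (posOf l₂ b).map (· + l₁.length) := by
  simp only [posOf, List.length_append, List.range_add, List.filter_append,
    List.filter_map, List.map_append, List.map_map]
  congr 1
  · congr 1
    refine List.filter_congr fun i hi => ?_
    rw [List.getD_append _ _ _ _ (List.mem_range.1 hi)]
  · congr 1
    · funext i
      simp only [Function.comp]
      omega
    · congr 1
      funext i
      simp [List.getElem?_append_right]

theorem bounds_of_mem_posOf {l : List Bool} {b : Bool} {x : ℕ} (h : x ∈ posOf l b) :
    1 ≤ x ∧ x ≤ l.length := by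
  simp only [posOf, List.mem_map, List.mem_filter, List.mem_range] at h
  obtain ⟨i, ⟨hi, -⟩, rfl⟩ := h
  omega

theorem succ_mem_posOf_iff {l : List Bool} {b : Bool} {i : ℕ} (h : i < l.length) :
    i + 1 ∈ posOf l b ↔ l.getD i false = b := by
  simp only [posOf, List.mem_map, List.mem_filter, List.mem_range, beq_iff_eq,
    Nat.add_right_cancel_iff, exists_eq_right, h, true_and]

theorem length_posOf_le (l : List Bool) (b : Bool) : (posOf l b).length ≤ l.length := by
  simpa [posOf] using List.length_filter_le _ (List.range l.length)

theorem length_posOf_false_add_length_posOf_true (l : List Bool) :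
    (posOf l false).length + (posOf l true).length = l.length := by
  have := (List.range l.length).length_eq_length_filter_add (fun i => l.getD i false == false)
  simp only [List.length_range] at this
  simp only [posOf, List.length_map]
  convert this.symm using 4
  simp

theorem posOf_injective {l₁ l₂ : List Bool} {b : Bool} (hlen : l₁.length = l₂.length)
    (h : posOf l₁ b = posOf l₂ b) : l₁ = l₂ := by
  refine List.ext_getElem hlen fun i h₁ h₂ => ?_
  have hi := (succ_mem_posOf_iff (b := b) h₁).symm.trans (h ▸ succ_mem_posOf_iff h₂)
  rw [List.getD_eq_getElem _ _ h₁, List.getD_eq_getElem _ _ h₂] at hi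
  cases b <;> simpa using hi

theorem posOf_replicate_true (n : ℕ) : posOf (List.replicate n true) true = List.range' 1 n := by
  rw [posOf, List.filter_eq_self.2, List.range'_eq_map_range]
  · simp [Nat.add_comm]
  · intro i hi
    simp_all

theorem posOf_replicate_false (n : ℕ) : posOf (List.replicate n true) false = [] := by
  rw [posOf, List.filter_eq_nil_iff.2, List.map_nil]
  intro i hi
  simp_all

theorem idxOf_reverse_range' {n j : ℕ} (h₁ : 1 ≤ j) (h₂ : j ≤ n) :
    (List.range' 1 n).reverse.idxOf j = n - j := by
  have hnd : (List.range' 1 n).reverse.Nodup := List.nodup_reverse.2 (List.nodup_range' ..)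
  have hlt : n - j < (List.range' 1 n).reverse.length := by
    simp only [List.length_reverse, List.length_range']; omega
  have hget : (List.range' 1 n).reverse[n - j] = j := by
    simp only [List.getElem_reverse, List.length_range', List.getElem_range', one_mul]; omega
  conv_lhs => rw [← hget]
  rw [hnd.idxOf_getElem]

theorem takeWhile_take_append_cons {U R : List ℕ} {x k : ℕ} (hU : x ∉ U) (hk : U.length ≤ k) :
    ((U ++ x :: R).take k).takeWhile (· != x) = U := by
  have hUall : ∀ a ∈ U, (a != x) = true := fun a ha => by
    simpa using fun h : a = x => hU (h ▸ ha)
  rw [List.take_append, List.take_of_length_le hk, List.takeWhile_append,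
    List.takeWhile_eq_self_iff.2 hUall, if_pos rfl]
  cases k - U.length <;> simp

theorem Pb_eq (ω : ℕ) :
    Pb ω = (posOf ((binRep ω).map (!·)) false).map (· + (binRep ω).length)
      ++ (2 * (binRep ω).length + 1)
        :: (((posOf ((binRep ω).map (!·)) true).map (· + (binRep ω).length)).reverse
          ++ (List.range' 1 (binRep ω).length).reverse) := by
  simp [Pb, Z0, Z1, extBin, posOf_append, posOf_replicate_true, posOf_replicate_false,
    show posOf [false] false = [1] from rfl, show posOf [false] true = [] from rfl]
  omega

theorem length_Pb (ω : ℕ) : (Pb ω).length = 2 * (binRep ω).length + 1 := by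
  have := length_posOf_false_add_length_posOf_true ((binRep ω).map (!·))
  simp only [List.length_map] at this
  simp only [Pb_eq, List.length_append, List.length_map, List.length_cons, List.length_reverse,
    List.length_range']
  omega

theorem Ps_succ_eq_getD (ω : ℕ) {i : ℕ} (hi : i < (binRep ω).length) :
    Ps ω (i + 1) = (Pb ω).getD i 0 := by
  set n := (binRep ω).length
  have hlarge : i + 1 ∉ (posOf ((binRep ω).map (!·)) false).map (· + n)
      ++ (2 * n + 1) :: ((posOf ((binRep ω).map (!·)) true).map (· + n)).reverse := by
    simp only [List.mem_append, List.mem_map, List.mem_cons, List.mem_reverse, not_or]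
    refine ⟨?_, by omega, ?_⟩ <;>
      exact fun ⟨x, hx, hxi⟩ => absurd (bounds_of_mem_posOf hx).1 (by omega)
  have hidx : (Pb ω).idxOf (i + 1) = (n + 1) + (n - (i + 1)) := by
    have := length_posOf_false_add_length_posOf_true ((binRep ω).map (!·))
    simp only [List.length_map] at this
    rw [Pb_eq, ← List.cons_append, ← List.append_assoc, List.idxOf_append_of_notMem hlarge,
      idxOf_reverse_range' (by omega) (by omega)]
    simp only [List.length_append, List.length_map, List.length_cons, List.length_reverse]
    omega
  rw [Ps, hidx, length_Pb]
  congr 1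
  omega

theorem take_Pb_eq_map_Ps (ω : ℕ) :
    (Pb ω).take (binRep ω).length = (List.range' 1 (binRep ω).length).map (Ps ω) := by
  refine List.ext_getElem ?_ fun i _ h₂ => ?_
  · simp only [List.length_take, length_Pb, List.length_map, List.length_range']
    omega
  · have hi : i < (binRep ω).length := by simpa using h₂
    rw [List.getElem_take, List.getElem_map, List.getElem_range', one_mul, Nat.add_comm,
      Ps_succ_eq_getD ω hi, List.getD_eq_getElem]

theorem takeWhile_take_Pb (ω : ℕ) :
    ((Pb ω).take (binRep ω).length).takeWhile (· != 2 * (binRep ω).length + 1)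
      = (posOf ((binRep ω).map (!·)) false).map (· + (binRep ω).length) := by
  rw [Pb_eq]
  refine takeWhile_take_append_cons ?_ ?_
  · simp only [List.mem_map, not_exists, not_and]
    intro x hx
    have := (bounds_of_mem_posOf hx).2
    simp only [List.length_map] at this
    omega
  · simpa using length_posOf_le ((binRep ω).map (!·)) false

theorem binRep_injective : Function.Injective binRep := by
  intro ω₁ ω₂ h
  rw [← Nat.digits_inj_iff (b := 2), Nat.digits_two_eq_bits, Nat.digits_two_eq_bits,
    ← List.reverse_inj.1 h]

theorem stmt19_general (n ω₁ ω₂ : ℕ)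
    (hn₁ : (binRep ω₁).length = n) (hn₂ : (binRep ω₂).length = n)
    (h : ∀ x ∈ Finset.Icc 1 (2*n+1), Ps ω₁ x = Ps ω₂ x) :
    ω₁ = ω₂ := by
  have htake : (Pb ω₁).take n = (Pb ω₂).take n := by
    rw [← hn₁, take_Pb_eq_map_Ps, hn₁, ← hn₂, take_Pb_eq_map_Ps, hn₂]
    refine List.map_congr_left fun x hx => h x ?_
    simp only [List.mem_range'_1] at hx
    simp only [Finset.mem_Icc]
    omega
  have hZ : posOf ((binRep ω₁).map (!·)) false = posOf ((binRep ω₂).map (!·)) false := by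
    have h₁ := takeWhile_take_Pb ω₁
    have h₂ := takeWhile_take_Pb ω₂
    rw [hn₁, htake] at h₁
    rw [hn₂] at h₂
    exact List.map_injective_iff.2 (add_left_injective n) (h₁.symm.trans h₂)
  apply binRep_injective
  exact List.map_injective_iff.2 Bool.not_injective (posOf_injective (by simp [hn₁, hn₂]) hZ)

/-- The encoding `ω ↦ P_s` is injective on `n`-bit keys: if the permutations `P_s`
of two `n`-bit keys agree on `{1,…,2n+1}`, the keys coincide. -/
theorem stmt19 (n ω₁ ω₂ : ℕ) (h₁ : 0 < ω₁) (h₂ : 0 < ω₂)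
    (hn₁ : (binRep ω₁).length = n) (hn₂ : (binRep ω₂).length = n)
    (h : ∀ x ∈ Finset.Icc 1 (2*n+1), Ps ω₁ x = Ps ω₂ x) :
    ω₁ = ω₂ :=
  stmt19_general n ω₁ ω₂ hn₁ hn₂ h
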